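/- arXiv:2604.09671 — 2 statements merged into one kernel-verified Lean document; each statement's English description precedes it below -/
import Mathlib

section
/- Combining reward perturbation eps_r and transition perturbation eps_P: if |r - r'| <= eps_r pointwise and TV(P(.|s,a), P'(.|s,a)) <= eps_P for all (s,a), with |r| <= 1 and discount gamma in [0,1), then for any policy pi, sup_s |V^pi_{r,P}(s) - V^pi_{r',P'}(s)| <= eps_r/(1-gamma) + 2 gamma eps_P/(1-gamma)^2. -/
/-!
Work with the sup norm `‖·‖` on `S → ℝ`. Averaging against `π` and `P` does not increase it, so
the fixed-point equation for `V` and `|r| ≤ 1` give `‖V‖ ≤ 1 + γ ‖V‖`, i.e. `‖V‖ ≤ 1 / (1 - γ)`. Splitting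
`P V - P' V' = (P - P') V + P' (V - V')` bounds the transition error by `2 ε_P ‖V‖ + ‖V - V'‖`,
hence `‖V - V'‖ ≤ ε_r + γ (2 ε_P / (1 - γ) + ‖V - V'‖)`, which solves to the claimed bound.
-/

open Finset

section WeightedSums

variable {ι : Type*} [Fintype ι]

lemma abs_sum_mul_le_of_sum_eq_one {w f : ι → ℝ} {c : ℝ} (hw0 : ∀ i, 0 ≤ w i)
    (hw1 : ∑ i, w i = 1) (hf : ∀ i, |f i| ≤ c) : |∑ i, w i * f i| ≤ c :=
  calc |∑ i, w i * f i| ≤ ∑ i, w i * |f i| := by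
        refine (abs_sum_le_sum_abs _ _).trans_eq (sum_congr rfl fun i _ => ?_)
        rw [abs_mul, abs_of_nonneg (hw0 i)]
    _ ≤ ∑ i, w i * c := sum_le_sum fun i _ => mul_le_mul_of_nonneg_left (hf i) (hw0 i)
    _ = c := by rw [← sum_mul, hw1, one_mul]

lemma abs_sum_mul_le_norm_of_sum_eq_one {w : ι → ℝ} (f : ι → ℝ) (hw0 : ∀ i, 0 ≤ w i)
    (hw1 : ∑ i, w i = 1) : |∑ i, w i * f i| ≤ ‖f‖ :=
  abs_sum_mul_le_of_sum_eq_one hw0 hw1 fun i => by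
    simpa only [Real.norm_eq_abs] using norm_le_pi_norm f i

lemma abs_sum_sub_mul_le (p q f : ι → ℝ) {ε : ℝ} (hpq : (1 / 2) * ∑ i, |p i - q i| ≤ ε) :
    |∑ i, (p i - q i) * f i| ≤ 2 * ε * ‖f‖ :=
  calc |∑ i, (p i - q i) * f i| ≤ ∑ i, |p i - q i| * ‖f‖ := by
        refine (abs_sum_le_sum_abs _ _).trans (sum_le_sum fun i _ => ?_)
        rw [abs_mul, ← Real.norm_eq_abs (f i)]
        exact mul_le_mul_of_nonneg_left (norm_le_pi_norm f i) (abs_nonneg _)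
    _ = (∑ i, |p i - q i|) * ‖f‖ := (sum_mul _ _ _).symm
    _ ≤ 2 * ε * ‖f‖ := mul_le_mul_of_nonneg_right (by linarith) (norm_nonneg f)

lemma abs_add_mul_le {γ : ℝ} (hγ : 0 ≤ γ) (x y : ℝ) : |x + γ * y| ≤ |x| + γ * |y| := by
  simpa only [abs_mul, abs_of_nonneg hγ] using abs_add_le x (γ * y)

lemma norm_le_div_one_sub_of_abs_le [Nonempty ι] {f : ι → ℝ} {a γ : ℝ} (hγ : γ < 1)
    (hf : ∀ i, |f i| ≤ a + γ * ‖f‖) : ‖f‖ ≤ a / (1 - γ) := by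
  have hnorm : ‖f‖ ≤ a + γ * ‖f‖ :=
    (pi_norm_le_iff_of_nonempty f).2 fun i => by simpa only [Real.norm_eq_abs] using hf i
  rw [le_div_iff₀ (by linarith)]
  linarith

end WeightedSums

section PolicyEvaluation

variable {S A : Type*} [Fintype S] [Fintype A] {P P' : S → A → S → ℝ} {π r r' : S → A → ℝ}
  {V V' : S → ℝ} {γ : ℝ}

lemma abs_value_le (hγ0 : 0 ≤ γ) (hP0 : ∀ s a s', 0 ≤ P s a s') (hP1 : ∀ s a, ∑ s', P s a s' = 1)
    (hπ0 : ∀ s a, 0 ≤ π s a) (hπ1 : ∀ s, ∑ a, π s a = 1) {R : ℝ} (hrb : ∀ s a, |r s a| ≤ R)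
    (hV : ∀ s, V s = ∑ a, π s a * (r s a + γ * ∑ s', P s a s' * V s')) (s : S) :
    |V s| ≤ R + γ * ‖V‖ := by
  rw [hV s]
  refine abs_sum_mul_le_of_sum_eq_one (hπ0 s) (hπ1 s) fun a => ?_
  refine (abs_add_mul_le hγ0 _ _).trans ?_
  gcongr
  exacts [hrb s a, abs_sum_mul_le_norm_of_sum_eq_one V (hP0 s a) (hP1 s a)]

lemma abs_value_sub_value_le (hγ0 : 0 ≤ γ) (hP'0 : ∀ s a s', 0 ≤ P' s a s')
    (hP'1 : ∀ s a, ∑ s', P' s a s' = 1) (hπ0 : ∀ s a, 0 ≤ π s a) (hπ1 : ∀ s, ∑ a, π s a = 1)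
    {εr εP K : ℝ} (hr : ∀ s a, |r s a - r' s a| ≤ εr)
    (hTV : ∀ s a, (1 / 2) * ∑ s', |P s a s' - P' s a s'| ≤ εP) (hVK : ‖V‖ ≤ K)
    (hV : ∀ s, V s = ∑ a, π s a * (r s a + γ * ∑ s', P s a s' * V s'))
    (hV' : ∀ s, V' s = ∑ a, π s a * (r' s a + γ * ∑ s', P' s a s' * V' s')) (s : S) :
    |V s - V' s| ≤ εr + γ * (2 * εP * K + ‖V - V'‖) := by
  have hsplit : V s - V' s = ∑ a, π s a * ((r s a - r' s a) + γ *
      (∑ s', (P s a s' - P' s a s') * V s' + ∑ s', P' s a s' * (V - V') s')) := by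
    rw [hV s, hV' s, ← sum_sub_distrib]
    refine sum_congr rfl fun a _ => ?_
    simp only [Pi.sub_apply, mul_sub, sub_mul, sum_sub_distrib]
    ring
  rw [hsplit]
  refine abs_sum_mul_le_of_sum_eq_one (hπ0 s) (hπ1 s) fun a => ?_
  have hεP : 0 ≤ εP := le_trans (by positivity) (hTV s a)
  have htransfer : |∑ s', (P s a s' - P' s a s') * V s'| ≤ 2 * εP * K :=
    (abs_sum_sub_mul_le _ _ V (hTV s a)).trans (by gcongr)
  have hdrift : |∑ s', P' s a s' * (V - V') s'| ≤ ‖V - V'‖ :=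
    abs_sum_mul_le_norm_of_sum_eq_one _ (hP'0 s a) (hP'1 s a)
  refine (abs_add_mul_le hγ0 _ _).trans ?_
  gcongr
  · exact hr s a
  · exact (abs_add_le _ _).trans (add_le_add htransfer hdrift)

end PolicyEvaluation

/-- combined reward and transition perturbation bound
`ε_r/(1-γ) + 2 γ ε_P/(1-γ)^2` for the value of a fixed policy. -/
theorem stmt6 {S A : Type*} [Fintype S] [Fintype A]
    (P P' : S → A → S → ℝ) (π : S → A → ℝ) (r r' : S → A → ℝ)
    (V V' : S → ℝ) (γ εr εP : ℝ) (hγ0 : 0 ≤ γ) (hγ1 : γ < 1)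
    (hP0 : ∀ s a s', 0 ≤ P s a s') (hP1 : ∀ s a, ∑ s', P s a s' = 1)
    (hP'0 : ∀ s a s', 0 ≤ P' s a s') (hP'1 : ∀ s a, ∑ s', P' s a s' = 1)
    (hπ0 : ∀ s a, 0 ≤ π s a) (hπ1 : ∀ s, ∑ a, π s a = 1)
    (hrb : ∀ s a, |r s a| ≤ 1)
    (hr : ∀ s a, |r s a - r' s a| ≤ εr)
    (hTV : ∀ s a, (1 / 2) * ∑ s', |P s a s' - P' s a s'| ≤ εP)
    (hV : ∀ s, V s = ∑ a, π s a * (r s a + γ * ∑ s', P s a s' * V s'))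
    (hV' : ∀ s, V' s = ∑ a, π s a * (r' s a + γ * ∑ s', P' s a s' * V' s')) :
    ∀ s, |V s - V' s| ≤ εr / (1 - γ) + 2 * γ * εP / (1 - γ) ^ 2 := by
  intro s
  have : Nonempty S := ⟨s⟩
  have hV_le : ‖V‖ ≤ 1 / (1 - γ) :=
    norm_le_div_one_sub_of_abs_le hγ1 (abs_value_le hγ0 hP0 hP1 hπ0 hπ1 hrb hV)
  have hdiff_le : ‖V - V'‖ ≤ (εr + γ * (2 * εP * (1 / (1 - γ)))) / (1 - γ) :=
    norm_le_div_one_sub_of_abs_le hγ1 fun s => by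
      have := abs_value_sub_value_le hγ0 hP'0 hP'1 hπ0 hπ1 hr hTV hV_le hV hV' s
      rw [Pi.sub_apply]
      linarith
  calc |V s - V' s| ≤ ‖V - V'‖ := by
        simpa only [Real.norm_eq_abs, Pi.sub_apply] using norm_le_pi_norm (V - V') s
    _ ≤ _ := hdiff_le
    _ = εr / (1 - γ) + 2 * γ * εP / (1 - γ) ^ 2 := by
        field_simp [(by linarith : (1 : ℝ) - γ ≠ 0)]
end

section
/- Performance difference lemma: for any two policies pi and pi' in a finite discounted MDP, V^{pi'}(s_0) - V^{pi}(s_0) = (1/(1-gamma)) * E_{s ~ d^{pi'}_{s_0}} [ sum_a pi'(a|s) A^{pi}(s,a) ], where A^{pi}(s,a) = Q^{pi}(s,a) - V^{pi}(s) and d^{pi'}_{s_0} is the normalized discounted state occupancy of pi' started from s_0. -/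
open Finset Filter Topology

/-- performance difference lemma.  `pt t s` is the probability of
being in state `s` at time `t` under policy `π'` started at `s0`, and
`d s = (1-γ) ∑_t γ^t pt t s` is the normalized discounted occupancy. -/
theorem stmt9 {S A : Type*} [Fintype S] [Fintype A] [DecidableEq S]
    (P : S → A → S → ℝ) (π π' : S → A → ℝ) (r : S → A → ℝ)
    (Vpi Vpi' : S → ℝ) (Qpi : S → A → ℝ) (γ : ℝ) (s0 : S)
    (pt : ℕ → S → ℝ) (d : S → ℝ)
    (hγ0 : 0 ≤ γ) (hγ1 : γ < 1)
    (hP0 : ∀ s a s', 0 ≤ P s a s') (hP1 : ∀ s a, ∑ s', P s a s' = 1)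
    (hπ0 : ∀ s a, 0 ≤ π s a) (hπ1 : ∀ s, ∑ a, π s a = 1)
    (hπ'0 : ∀ s a, 0 ≤ π' s a) (hπ'1 : ∀ s, ∑ a, π' s a = 1)
    (hV : ∀ s, Vpi s = ∑ a, π s a * Qpi s a)
    (hQ : ∀ s a, Qpi s a = r s a + γ * ∑ s', P s a s' * Vpi s')
    (hV' : ∀ s, Vpi' s = ∑ a, π' s a * (r s a + γ * ∑ s', P s a s' * Vpi' s'))
    (hpt0 : ∀ s, pt 0 s = if s = s0 then 1 else 0)
    (hptrec : ∀ t s', pt (t + 1) s' = ∑ s, pt t s * ∑ a, π' s a * P s a s')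
    (hd : ∀ s, d s = (1 - γ) * ∑' t : ℕ, γ ^ t * pt t s) :
    Vpi' s0 - Vpi s0
      = (1 / (1 - γ)) * ∑ s, d s * ∑ a, π' s a * (Qpi s a - Vpi s) := by
  have hγne : (1 : ℝ) - γ ≠ 0 := by linarith
  set g : S → ℝ := fun s => ∑ a, π' s a * (Qpi s a - Vpi s) with hgdef
  set Δ : S → ℝ := fun s => Vpi' s - Vpi s with hΔdef
  set K : S → S → ℝ := fun s s' => ∑ a, π' s a * P s a s' with hKdef
  have hptrecK : ∀ t s', pt (t + 1) s' = ∑ s, pt t s * K s s' := hptrec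
  -- key Bellman-like equation for the difference
  have key : ∀ s, Δ s = g s + γ * ∑ s', K s s' * Δ s' := by
    intro s
    have h1 : ∑ s', K s s' * Δ s' = ∑ a, π' s a * ∑ s', P s a s' * Δ s' := by
      simp only [hKdef, Finset.sum_mul, Finset.mul_sum]
      rw [Finset.sum_comm]
      exact Finset.sum_congr rfl fun a _ => Finset.sum_congr rfl fun s' _ => by ring
    have hg : g s = (∑ a, π' s a * Qpi s a) - Vpi s := by
      simp only [hgdef, mul_sub, Finset.sum_sub_distrib, ← Finset.sum_mul, hπ'1, one_mul]
    have hPs : ∀ a, ∑ s', P s a s' * Δ s'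
        = (∑ s', P s a s' * Vpi' s') - ∑ s', P s a s' * Vpi s' := by
      intro a
      rw [← Finset.sum_sub_distrib]
      exact Finset.sum_congr rfl fun s' _ => by
        show P s a s' * (Vpi' s' - Vpi s') = _; ring
    have expand : ∀ a, π' s a * (r s a + γ * ∑ s', P s a s' * Vpi' s')
        = π' s a * Qpi s a + γ * (π' s a * ∑ s', P s a s' * Δ s') := by
      intro a; rw [hQ, hPs a]; ring
    rw [h1, hg]
    show Vpi' s - Vpi s = _
    calc Vpi' s - Vpi s
        = (∑ a, (π' s a * Qpi s a + γ * (π' s a * ∑ s', P s a s' * Δ s'))) - Vpi s := by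
          rw [hV' s]
          exact congrArg (· - Vpi s) (Finset.sum_congr rfl fun a _ => expand a)
      _ = (∑ a, π' s a * Qpi s a) - Vpi s + γ * ∑ a, π' s a * ∑ s', P s a s' * Δ s' := by
          rw [Finset.sum_add_distrib, ← Finset.mul_sum]; ring
  -- occupancy properties
  have hptnn : ∀ t s, 0 ≤ pt t s := by
    intro t
    induction t with
    | zero => intro s; rw [hpt0]; split <;> norm_num
    | succ n ih =>
      intro s'
      rw [hptrec]
      exact Finset.sum_nonneg fun s _ => mul_nonneg (ih s)
        (Finset.sum_nonneg fun a _ => mul_nonneg (hπ'0 s a) (hP0 s a s'))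
  have hptsum : ∀ t, ∑ s, pt t s = 1 := by
    intro t
    induction t with
    | zero => simp [hpt0]
    | succ n ih =>
      simp only [hptrec]
      rw [Finset.sum_comm]
      have h : ∀ s, ∑ s', pt n s * ∑ a, π' s a * P s a s' = pt n s := by
        intro s
        rw [← Finset.mul_sum, Finset.sum_comm]
        simp only [← Finset.mul_sum, hP1, mul_one, hπ'1]
      rw [Finset.sum_congr rfl fun s _ => h s, ih]
  have hptle : ∀ t s, pt t s ≤ 1 := fun t s => by
    calc pt t s ≤ ∑ s', pt t s' :=
          Finset.single_le_sum (fun s' _ => hptnn t s') (Finset.mem_univ s)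
      _ = 1 := hptsum t
  set F : ℕ → ℝ := fun t => ∑ s, pt t s * Δ s with hFdef
  set G : ℕ → ℝ := fun t => ∑ s, pt t s * g s with hGdef
  have hstep : ∀ t, F t = G t + γ * F (t + 1) := by
    intro t
    have h2 : F (t + 1) = ∑ s, pt t s * ∑ s', K s s' * Δ s' := by
      calc F (t + 1) = ∑ s', pt (t + 1) s' * Δ s' := rfl
        _ = ∑ s', ∑ s, pt t s * K s s' * Δ s' := by
            simp only [hptrecK, Finset.sum_mul]
        _ = ∑ s, ∑ s', pt t s * K s s' * Δ s' := Finset.sum_comm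
        _ = ∑ s, pt t s * ∑ s', K s s' * Δ s' := Finset.sum_congr rfl fun s _ => by
            rw [Finset.mul_sum]
            exact Finset.sum_congr rfl fun s' _ => by ring
    rw [h2]
    calc F t = ∑ s, pt t s * Δ s := rfl
      _ = ∑ s, (pt t s * g s + γ * (pt t s * ∑ s', K s s' * Δ s')) :=
          Finset.sum_congr rfl fun s _ => by rw [key s]; ring
      _ = G t + γ * ∑ s, pt t s * ∑ s', K s s' * Δ s' := by
          rw [Finset.sum_add_distrib, ← Finset.mul_sum]
  have hF0 : F 0 = Δ s0 := by
    simp only [hFdef, hpt0, ite_mul, one_mul, zero_mul]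
    rw [Finset.sum_ite_eq' Finset.univ s0 Δ]
    simp
  have htel : ∀ n, F 0 = (∑ t ∈ Finset.range n, γ ^ t * G t) + γ ^ n * F n := by
    intro n
    induction n with
    | zero => simp
    | succ n ih =>
      rw [ih, Finset.sum_range_succ, hstep n]
      ring
  set C : ℝ := ∑ s, |Δ s| with hCdef
  set Cg : ℝ := ∑ s, |g s| with hCgdef
  have habs : ∀ (f : S → ℝ) t, |∑ s, pt t s * f s| ≤ ∑ s, |f s| := by
    intro f t
    calc |∑ s, pt t s * f s| ≤ ∑ s, |pt t s * f s| := Finset.abs_sum_le_sum_abs _ _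
      _ ≤ ∑ s, |f s| := Finset.sum_le_sum fun s _ => by
          rw [abs_mul, abs_of_nonneg (hptnn t s)]
          nlinarith [abs_nonneg (f s), hptle t s, hptnn t s]
  have hγpow : ∀ t : ℕ, (0:ℝ) ≤ γ ^ t := fun t => pow_nonneg hγ0 t
  have hsumG : Summable (fun t : ℕ => γ ^ t * G t) := by
    apply Summable.of_norm_bounded (g := fun t => Cg * γ ^ t)
      ((summable_geometric_of_lt_one hγ0 hγ1).mul_left Cg)
    intro t
    rw [Real.norm_eq_abs, abs_mul, abs_of_nonneg (hγpow t)]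
    calc γ ^ t * |G t| ≤ γ ^ t * Cg :=
          mul_le_mul_of_nonneg_left (habs g t) (hγpow t)
      _ = Cg * γ ^ t := by ring
  have hlim : Filter.Tendsto (fun n => ∑ t ∈ Finset.range n, γ ^ t * G t)
      Filter.atTop (nhds (F 0)) := by
    have h3 : ∀ n, ∑ t ∈ Finset.range n, γ ^ t * G t = F 0 - γ ^ n * F n := by
      intro n; rw [htel n]; ring
    simp only [h3]
    have h4 : Filter.Tendsto (fun n : ℕ => γ ^ n * F n) Filter.atTop (nhds 0) := by
      refine squeeze_zero_norm (a := fun n => C * γ ^ n) (fun n => ?_) ?_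
      · show ‖γ ^ n * F n‖ ≤ C * γ ^ n
        rw [Real.norm_eq_abs, abs_mul, abs_of_nonneg (hγpow n)]
        calc γ ^ n * |F n| ≤ γ ^ n * C :=
              mul_le_mul_of_nonneg_left (habs Δ n) (hγpow n)
          _ = C * γ ^ n := by ring
      · have := (tendsto_pow_atTop_nhds_zero_of_lt_one hγ0 hγ1).const_mul C
        simpa using this
    have := Filter.Tendsto.sub (tendsto_const_nhds (x := F 0)) h4
    simpa using this
  have htsumF : ∑' t : ℕ, γ ^ t * G t = F 0 :=
    tendsto_nhds_unique hsumG.hasSum.tendsto_sum_nat hlim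
  -- summability per state
  have hsummand : ∀ s, Summable (fun t : ℕ => γ ^ t * pt t s * g s) := by
    intro s
    apply Summable.of_norm_bounded (g := fun t => |g s| * γ ^ t)
      ((summable_geometric_of_lt_one hγ0 hγ1).mul_left _)
    intro t
    rw [Real.norm_eq_abs, abs_mul, abs_mul, abs_of_nonneg (hγpow t),
      abs_of_nonneg (hptnn t s)]
    calc γ ^ t * pt t s * |g s| ≤ γ ^ t * |g s| :=
          mul_le_mul_of_nonneg_right
            (mul_le_of_le_one_right (hγpow t) (hptle t s)) (abs_nonneg (g s))
      _ = |g s| * γ ^ t := by ring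
  have hswap : ∑' t : ℕ, γ ^ t * G t = ∑ s, (∑' t : ℕ, γ ^ t * pt t s) * g s := by
    have h5 : ∀ t : ℕ, γ ^ t * G t = ∑ s, γ ^ t * pt t s * g s := by
      intro t; rw [hGdef]; rw [Finset.mul_sum]
      exact Finset.sum_congr rfl fun s _ => by ring
    simp only [h5]
    rw [Summable.tsum_finsetSum (fun s _ => hsummand s)]
    exact Finset.sum_congr rfl fun s _ => by rw [tsum_mul_right]
  have hrhs : (1 / (1 - γ)) * ∑ s, d s * g s = ∑ s, (∑' t : ℕ, γ ^ t * pt t s) * g s := by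
    rw [Finset.mul_sum]
    refine Finset.sum_congr rfl fun s _ => ?_
    rw [hd s]
    field_simp
  calc Vpi' s0 - Vpi s0 = F 0 := hF0.symm
    _ = ∑' t : ℕ, γ ^ t * G t := htsumF.symm
    _ = ∑ s, (∑' t : ℕ, γ ^ t * pt t s) * g s := hswap
    _ = (1 / (1 - γ)) * ∑ s, d s * g s := hrhs.symm
end
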